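/- Let $M^n$, $n \geq 3$, be an $n$-dimensional submanifold of an $m$-dimensional, $m \geq 4$, conformally flat Riemannian manifold $(\widetilde{M}^m, \widetilde{g})$. Then the scalar curvature $\tau$ of $M^n$ satisfies $\tau = \frac{n-1}{m-2}\sum_{j=1}^n \widetilde{Ric}(e_j, e_j) - \frac{n(n-1)\widetilde{\tau}}{(m-1)(m-2)} + \sum_{r=1}^{m-n} \sum_{1 \leq i < j \leq n}\left( h_{ii}^r h_{jj}^r - (h_{ij}^r)^2 \right)$, where $\{e_j\}_{1 \leq j \leq n}$ is a local orthonormal tangent frame and $h_{ij}^r = \widetilde{g}(h(e_i, e_j), \upsilon_r)$ are the components of the second fundamental form with respect to a local orthonormal normal frame $\{\upsilon_r\}_{1 \leq r \leq m-n}$. -/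

import Mathlib

/-!
When the Weyl tensor vanishes, the ambient sectional curvature of an orthonormal pair
`e_i, e_j` is `(Ric~(e_i,e_i) + Ric~(e_j,e_j))/(m-2) - 2τ~/((m-1)(m-2))`. Summing over the pairs
`i < j` of a tangent frame, each `Ric~(e_j,e_j)` occurs `n - 1` times. The Gauss equation adds
`∑_r (h^r_ii h^r_jj - (h^r_ij)²)` to each sectional curvature of the submanifold.
-/

open Finset Matrix

/-- Kronecker delta (the components of the metric in an orthonormal frame). -/
noncomputable def kdelta {k : ℕ} (a b : Fin k) : ℝ := if a = b then 1 else 0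

/-- The scalar curvature `tau = sum_{i<j} R(e_i, e_j, e_j, e_i)` computed from the
components of the curvature tensor in an orthonormal frame. -/
noncomputable def scalarCurv {n : ℕ} (R : Fin n → Fin n → Fin n → Fin n → ℝ) : ℝ :=
  ∑ i : Fin n, ∑ j : Fin n, if i < j then R i j j i else 0

/-- The normalized scalar curvature `rho = 2 tau / (n (n - 1))`. -/
noncomputable def normScalarCurv {n : ℕ} (R : Fin n → Fin n → Fin n → Fin n → ℝ) : ℝ :=
  2 * scalarCurv R / ((n : ℝ) * ((n : ℝ) - 1))

/-- The normal scalar curvature `K_N = -(1/4) sum_{r,s} trace ([A_r, A_s]^2)` computed from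
the shape operators (given as symmetric matrices in an orthonormal tangent frame). -/
noncomputable def KN {n p : ℕ} (A : Fin p → Matrix (Fin n) (Fin n) ℝ) : ℝ :=
  -(1 / 4) * ∑ r : Fin p, ∑ s : Fin p,
    Matrix.trace ((A r * A s - A s * A r) * (A r * A s - A s * A r))

/-- The normalized normal scalar curvature `rho_N = (2/(n(n-1))) sqrt(K_N)`. -/
noncomputable def rhoN {n p : ℕ} (A : Fin p → Matrix (Fin n) (Fin n) ℝ) : ℝ :=
  2 / ((n : ℝ) * ((n : ℝ) - 1)) * Real.sqrt (KN A)

/-- The squared mean curvature `|H|^2 = sum_r ((1/n) trace A_r)^2` computed from the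
components of the second fundamental form in adapted orthonormal frames. -/
noncomputable def meanCurvSq {n p : ℕ} (A : Fin p → Matrix (Fin n) (Fin n) ℝ) : ℝ :=
  ∑ r : Fin p, ((1 / (n : ℝ)) * ∑ i : Fin n, A r i i) ^ 2

/-- The normalized normal scalar curvature
`rho^perp = (2/(n(n-1))) sqrt( sum_{i<j} sum_{r<s} (Rperp(e_i,e_j,v_r,v_s))^2 )`
computed from the components of the normal curvature tensor. -/
noncomputable def rhoPerp {n p : ℕ} (Rp : Fin n → Fin n → Fin p → Fin p → ℝ) : ℝ :=
  2 / ((n : ℝ) * ((n : ℝ) - 1)) *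
    Real.sqrt (∑ i : Fin n, ∑ j : Fin n, ∑ r : Fin p, ∑ s : Fin p,
      if i < j ∧ r < s then Rp i j r s ^ 2 else 0)

/-- The Ricci curvature `Ric(e_b, e_c) = sum_a R(e_a, e_b, e_c, e_a)` computed from the
components of the curvature tensor in an orthonormal frame. -/
noncomputable def ambRicci {m : ℕ} (Rt : Fin m → Fin m → Fin m → Fin m → ℝ)
    (b c : Fin m) : ℝ :=
  ∑ a : Fin m, Rt a b c a

/-- The (ambient) scalar curvature `tau = sum_{a<b} sigma(e_a, e_b) = (1/2) sum_a Ric(e_a,e_a)`. -/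
noncomputable def ambScalar {m : ℕ} (Rt : Fin m → Fin m → Fin m → Fin m → ℝ) : ℝ :=
  (1 / 2) * ∑ a : Fin m, ambRicci Rt a a


theorem sum_sum_ite_lt_add {ι R : Type*} [Fintype ι] [LinearOrder ι] [CommRing R] (f : ι → R) :
    ∑ i, ∑ j, (if i < j then f i + f j else 0) = ((Fintype.card ι : R) - 1) * ∑ i, f i := by
  have hne : ∀ i j : ι, (if i < j then f i else 0) + (if j < i then f i else 0)
      = if j ≠ i then f i else 0 := by
    intro i j
    rcases lt_trichotomy i j with hij | rfl | hji
    · simp [hij, hij.ne', hij.not_gt]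
    · simp
    · simp [hji, hji.ne, hji.not_gt]
  have hrow : ∀ i : ι, ∑ j, (if j ≠ i then f i else 0) = ((Fintype.card ι : R) - 1) * f i := by
    intro i
    rw [← sum_filter, filter_ne', sum_const, card_erase_of_mem (mem_univ i), card_univ,
      nsmul_eq_mul, Nat.cast_pred (Fintype.card_pos_iff.mpr ⟨i⟩)]
  simp_rw [ite_add_zero, sum_add_distrib]
  rw [sum_comm (f := fun i j => if i < j then f j else 0), ← sum_add_distrib]
  simp_rw [← sum_add_distrib, hne, hrow, mul_sum]

/-- Vanishing of the Weyl tensor: the curvature tensor is the Kulkarni–Nomizu product of the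
Schouten tensor with the metric, written in an orthonormal frame. -/
def WeylVanishes {m : ℕ} (Rt : Fin m → Fin m → Fin m → Fin m → ℝ) : Prop :=
  ∀ x y z w : Fin m, Rt x y z w =
    (1 / ((m : ℝ) - 2)) *
      (ambRicci Rt y z * kdelta x w - ambRicci Rt x z * kdelta y w
        + ambRicci Rt x w * kdelta y z - ambRicci Rt y w * kdelta x z)
    - (2 * ambScalar Rt / (((m : ℝ) - 1) * ((m : ℝ) - 2))) *
        (kdelta y z * kdelta x w - kdelta x z * kdelta y w)

theorem WeylVanishes.apply_sectional {m : ℕ} {Rt : Fin m → Fin m → Fin m → Fin m → ℝ}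
    (hW : WeylVanishes Rt) {x y : Fin m} (hxy : x ≠ y) :
    Rt x y y x = (ambRicci Rt x x + ambRicci Rt y y) / ((m : ℝ) - 2)
      - 2 * ambScalar Rt / (((m : ℝ) - 1) * ((m : ℝ) - 2)) := by
  rw [hW]
  simp only [kdelta, hxy, hxy.symm, if_true, if_false]
  ring

theorem scalarCurv_add {n : ℕ} (A B : Fin n → Fin n → Fin n → Fin n → ℝ) :
    scalarCurv (fun i j k l => A i j k l + B i j k l) = scalarCurv A + scalarCurv B := by
  simp only [scalarCurv, ite_add_zero, sum_add_distrib]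

theorem scalarCurv_comp_of_weylVanishes {n m : ℕ} {Rt : Fin m → Fin m → Fin m → Fin m → ℝ}
    (hW : WeylVanishes Rt) {ι : Fin n → Fin m} (hι : Function.Injective ι) :
    scalarCurv (fun i j k l => Rt (ι i) (ι j) (ι k) (ι l)) =
      (((n : ℝ) - 1) / ((m : ℝ) - 2)) * ∑ j, ambRicci Rt (ι j) (ι j)
      - (n : ℝ) * ((n : ℝ) - 1) * ambScalar Rt / (((m : ℝ) - 1) * ((m : ℝ) - 2)) := by
  set f : Fin n → ℝ := fun i =>
    ambRicci Rt (ι i) (ι i) / ((m : ℝ) - 2) - ambScalar Rt / (((m : ℝ) - 1) * ((m : ℝ) - 2))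
  have hsec : ∀ i j : Fin n, i < j → Rt (ι i) (ι j) (ι j) (ι i) = f i + f j := by
    intro i j hij
    rw [hW.apply_sectional (hι.ne hij.ne)]
    simp only [f]
    ring
  calc scalarCurv (fun i j k l => Rt (ι i) (ι j) (ι k) (ι l))
      = ∑ i, ∑ j, (if i < j then f i + f j else 0) := by
        refine sum_congr rfl fun i _ => sum_congr rfl fun j _ => ?_
        split_ifs with hij
        exacts [hsec i j hij, rfl]
    _ = _ := by
        rw [sum_sum_ite_lt_add, Fintype.card_fin]
        simp only [f, sum_sub_distrib, sum_const, card_univ, Fintype.card_fin, nsmul_eq_mul,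
          ← sum_div]
        ring

theorem scalarCurv_gaussTerm {n p : ℕ} {h : Fin p → Matrix (Fin n) (Fin n) ℝ}
    (hsymm : ∀ r, (h r).IsSymm) :
    scalarCurv (fun i j k l => ∑ r, (h r i l * h r j k - h r i k * h r j l)) =
      ∑ r, ∑ i, ∑ j, (if i < j then h r i i * h r j j - h r i j ^ 2 else 0) := by
  have hji : ∀ r i j, h r j i = h r i j := fun r i j => (hsymm r).apply i j
  simp only [scalarCurv, hji, ← sq, ite_sum_zero]
  conv_lhs => enter [2, i]; rw [sum_comm]
  rw [sum_comm]

theorem scalarCurv_conformally_flat_general {n m : ℕ} (hnm : n ≤ m)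
    (Rt : Fin m → Fin m → Fin m → Fin m → ℝ)
    (R : Fin n → Fin n → Fin n → Fin n → ℝ)
    (h : Fin (m - n) → Matrix (Fin n) (Fin n) ℝ)
    (hsymm : ∀ r, (h r).IsSymm)
    (weyl : ∀ x y z w : Fin m, Rt x y z w =
      (1 / ((m : ℝ) - 2)) *
        (ambRicci Rt y z * kdelta x w - ambRicci Rt x z * kdelta y w
          + ambRicci Rt x w * kdelta y z - ambRicci Rt y w * kdelta x z)
      - (2 * ambScalar Rt / (((m : ℝ) - 1) * ((m : ℝ) - 2))) *
          (kdelta y z * kdelta x w - kdelta x z * kdelta y w))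
    (gauss : ∀ i j k l : Fin n, R i j k l =
      Rt (Fin.castLE hnm i) (Fin.castLE hnm j) (Fin.castLE hnm k) (Fin.castLE hnm l)
      + ∑ r : Fin (m - n), (h r i l * h r j k - h r i k * h r j l)) :
    scalarCurv R =
      (((n : ℝ) - 1) / ((m : ℝ) - 2)) *
          ∑ j : Fin n, ambRicci Rt (Fin.castLE hnm j) (Fin.castLE hnm j)
      - (n : ℝ) * ((n : ℝ) - 1) * ambScalar Rt / (((m : ℝ) - 1) * ((m : ℝ) - 2))
      + ∑ r : Fin (m - n), ∑ i : Fin n, ∑ j : Fin n,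
          (if i < j then h r i i * h r j j - h r i j ^ 2 else 0) := by
  have hR : R = fun i j k l =>
      Rt (Fin.castLE hnm i) (Fin.castLE hnm j) (Fin.castLE hnm k) (Fin.castLE hnm l)
      + ∑ r, (h r i l * h r j k - h r i k * h r j l) := by
    funext i j k l
    exact gauss i j k l
  rw [hR, scalarCurv_add, scalarCurv_comp_of_weylVanishes weyl (Fin.castLE_injective hnm),
    scalarCurv_gaussTerm hsymm]

/-- **Scalar curvature of a submanifold of a conformally flat manifold.**
Under the hypotheses `weyl` (conformal flatness of the ambient space) and `gauss`
(Gauss equation), the scalar curvature of the submanifold satisfies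
`τ = ((n-1)/(m-2)) ∑_j Ric~(e_j,e_j) - n(n-1)τ~/((m-1)(m-2))
   + ∑_r ∑_{i<j} ( h^r_ii h^r_jj - (h^r_ij)² )`. -/
theorem scalarCurv_conformally_flat {n m : ℕ} (hn : 3 ≤ n) (hm : 4 ≤ m) (hnm : n ≤ m)
    (Rt : Fin m → Fin m → Fin m → Fin m → ℝ)
    (R : Fin n → Fin n → Fin n → Fin n → ℝ)
    (h : Fin (m - n) → Matrix (Fin n) (Fin n) ℝ)
    (hsymm : ∀ r, (h r).IsSymm)
    (weyl : ∀ x y z w : Fin m, Rt x y z w =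
      (1 / ((m : ℝ) - 2)) *
        (ambRicci Rt y z * kdelta x w - ambRicci Rt x z * kdelta y w
          + ambRicci Rt x w * kdelta y z - ambRicci Rt y w * kdelta x z)
      - (2 * ambScalar Rt / (((m : ℝ) - 1) * ((m : ℝ) - 2))) *
          (kdelta y z * kdelta x w - kdelta x z * kdelta y w))
    (gauss : ∀ i j k l : Fin n, R i j k l =
      Rt (Fin.castLE hnm i) (Fin.castLE hnm j) (Fin.castLE hnm k) (Fin.castLE hnm l)
      + ∑ r : Fin (m - n), (h r i l * h r j k - h r i k * h r j l)) :
    scalarCurv R =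
      (((n : ℝ) - 1) / ((m : ℝ) - 2)) *
          ∑ j : Fin n, ambRicci Rt (Fin.castLE hnm j) (Fin.castLE hnm j)
      - (n : ℝ) * ((n : ℝ) - 1) * ambScalar Rt / (((m : ℝ) - 1) * ((m : ℝ) - 2))
      + ∑ r : Fin (m - n), ∑ i : Fin n, ∑ j : Fin n,
          (if i < j then h r i i * h r j j - h r i j ^ 2 else 0) :=
  scalarCurv_conformally_flat_general hnm Rt R h hsymm weyl gauss
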